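/- For a defined n-ary operator d, expressions e₁,…,eₙ, f, and i ∈ 1..n, the implication (eᵢ = f) ⟹ (d(e₁,…,eₙ) = d(e₁,…,e_{i−1},f,e_{i+1},…,eₙ)) is valid (true at every state of every Kripke model) whenever eᵢ and f are both rigid expressions or the i-th argument position of d is Leibniz. -/

import Mathlib

open scoped Classical

/-- FOML expressions. -/
inductive Expr (X V O : Type) (ar : O → ℕ) : Type where
  | rig   : X → Expr X V O ar
  | flex  : V → Expr X V O ar
  | app   : (op : O) → (Fin (ar op) → Expr X V O ar) → Expr X V O ar
  | eq    : Expr X V O ar → Expr X V O ar → Expr X V O ar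
  | fls   : Expr X V O ar
  | imp   : Expr X V O ar → Expr X V O ar → Expr X V O ar
  | all   : X → Expr X V O ar → Expr X V O ar
  | nabla : Expr X V O ar → Expr X V O ar

/-- Kripke model for FOML (with the rigid valuation ξ given separately). -/
structure Model (X V O : Type) (ar : O → ℕ) where
  U : Type
  tt : U
  ff : U
  tt_ne_ff : tt ≠ ff
  I : (op : O) → (Fin (ar op) → U) → U
  W : Type
  W_nonempty : Nonempty W
  R : W → W → Prop
  ζ : V → W → U
  box : Set U → U
  box_eq_tt : ∀ S : Set U, box S = tt ↔ S ⊆ {tt}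

variable {X V O : Type} {ar : O → ℕ}

noncomputable def eval (M : Model X V O ar) : Expr X V O ar → (X → M.U) → M.W → M.U
  | .rig x, ξ, _ => ξ x
  | .flex v, _, w => M.ζ v w
  | .app op es, ξ, w => M.I op (fun i => eval M (es i) ξ w)
  | .eq a b, ξ, w => if eval M a ξ w = eval M b ξ w then M.tt else M.ff
  | .fls, _, _ => M.ff
  | .imp a b, ξ, w => if (eval M a ξ w = M.tt → eval M b ξ w = M.tt) then M.tt else M.ff
  | .all x e, ξ, w => if (∀ d : M.U, eval M e (Function.update ξ x d) w = M.tt) then M.tt else M.ff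
  | .nabla e, ξ, w => M.box {u : M.U | ∃ w', M.R w w' ∧ eval M e ξ w' = u}

def sat (M : Model X V O ar) (ξ : X → M.U) (e : Expr X V O ar) (w : M.W) : Prop :=
  eval M e ξ w = M.tt

def Valid (e : Expr X V O ar) : Prop :=
  ∀ (M : Model X V O ar) (ξ : X → M.U) (w : M.W), sat M ξ e w

def Consequence (Γ : Set (Expr X V O ar)) (φ : Expr X V O ar) : Prop :=
  ∀ (M : Model X V O ar) (ξ : X → M.U),
    (∀ ψ ∈ Γ, ∀ w : M.W, sat M ξ ψ w) → ∀ w : M.W, sat M ξ φ w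

def Rigid : Expr X V O ar → Prop
  | .rig _ => True
  | .flex _ => False
  | .app _ es => ∀ i, Rigid (es i)
  | .eq a b => Rigid a ∧ Rigid b
  | .fls => True
  | .imp a b => Rigid a ∧ Rigid b
  | .all _ e => Rigid e
  | .nabla _ => False

def freeRigid (y : X) : Expr X V O ar → Prop
  | .rig x => y = x
  | .flex _ => False
  | .app _ es => ∃ i, freeRigid y (es i)
  | .eq a b => freeRigid y a ∨ freeRigid y b
  | .fls => False
  | .imp a b => freeRigid y a ∨ freeRigid y b
  | .all x e => y ≠ x ∧ freeRigid y e
  | .nabla e => freeRigid y e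

/-! ### Capture-avoiding substitution and defined operators -/

/-- The list of free rigid variables of an expression. -/
noncomputable def freeList : Expr X V O ar → List X
  | .rig x => [x]
  | .flex _ => []
  | .app _ es => (List.ofFn fun i => freeList (es i)).flatten
  | .eq a b => freeList a ++ freeList b
  | .fls => []
  | .imp a b => freeList a ++ freeList b
  | .all x e => (freeList e).filter (fun y => decide (y ≠ x))
  | .nabla e => freeList e

/-- A rigid variable avoiding a given (finite) list; exists since 𝒳 is denumerable. -/
noncomputable def freshVar [Infinite X] (l : List X) : X :=
  Classical.choose (Infinite.exists_notMem_finset l.toFinset)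

/-- Capture-avoiding simultaneous substitution: `subst σ e` replaces every free
    rigid variable `y` of `e` by `σ y`, renaming bound variables to fresh ones so
    that no free variable of the substituted expressions is captured. -/
noncomputable def subst [Infinite X] (σ : X → Expr X V O ar) :
    Expr X V O ar → Expr X V O ar
  | .rig x => σ x
  | .flex v => .flex v
  | .app op es => .app op (fun i => subst σ (es i))
  | .eq a b => .eq (subst σ a) (subst σ b)
  | .fls => .fls
  | .imp a b => .imp (subst σ a) (subst σ b)
  | .all x e =>
      let x' := freshVar ((freeList e).flatMap (fun y => freeList (σ y)))
      .all x' (subst (Function.update σ x (.rig x')) e)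
  | .nabla e => .nabla (subst σ e)

/-- The substitution [e₁/x₁, …, eₙ/xₙ] as a total map on rigid variables
    (the parameters x₁, …, xₙ being pairwise distinct). -/
noncomputable def substMap {n : ℕ} (xs : Fin n → X) (es : Fin n → Expr X V O ar) :
    X → Expr X V O ar :=
  fun y => if h : ∃ i, xs i = y then es h.choose else .rig y

/-- The application d(e₁,…,eₙ) of the operator defined by d(x₁,…,xₙ) ≜ body,
    i.e. the expression body[e₁/x₁, …, eₙ/xₙ]. -/
noncomputable def dApp [Infinite X] {n : ℕ} (xs : Fin n → X)
    (body : Expr X V O ar) (es : Fin n → Expr X V O ar) : Expr X V O ar :=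
  subst (substMap xs es) body

/-- `occursUnderNabla y e` holds iff `y` has a free occurrence in `e` lying in the
    scope of some occurrence of ∇ (i.e. within a non-Leibniz argument position). -/
def occursUnderNabla (y : X) : Expr X V O ar → Prop
  | .rig _ => False
  | .flex _ => False
  | .app _ es => ∃ i, occursUnderNabla y (es i)
  | .eq a b => occursUnderNabla y a ∨ occursUnderNabla y b
  | .fls => False
  | .imp a b => occursUnderNabla y a ∨ occursUnderNabla y b
  | .all x e => y ≠ x ∧ occursUnderNabla y e
  | .nabla e => freeRigid y e

/-- The i-th argument position of the operator defined by d(x₁,…,xₙ) ≜ body is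
    Leibniz iff xᵢ does not occur within a non-Leibniz argument position in body. -/
def LeibnizPos {n : ℕ} (xs : Fin n → X) (body : Expr X V O ar) (i : Fin n) : Prop :=
  ¬ occursUnderNabla (xs i) body

/-! Unfolding `d`, the two sides are `body` under substitutions `σ` and `τ` that differ only at
`xᵢ`. By induction on `body`, two substitution instances take the same value at a state `w` as
soon as `σ y` and `τ y` agree at `w` for every free `y`, and agree at *every* state for those `y`
that occur under `∇`, since `∇` reads its argument at the accessible states. At `xᵢ` the first
condition is the antecedent `eᵢ = f`; the second is required only when `xᵢ` occurs under `∇`, i.e.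
when position `i` is not Leibniz, and then `eᵢ` and `f` are rigid, so their values do not depend
on the state. -/

section Semantics

variable (M : Model X V O ar)

lemma sat_eq_iff {a b : Expr X V O ar} {ξ : X → M.U} {w : M.W} :
    sat M ξ (.eq a b) w ↔ eval M a ξ w = eval M b ξ w := by
  simp only [sat, eval]
  split_ifs with h
  · exact iff_of_true rfl h
  · exact iff_of_false M.tt_ne_ff.symm h

lemma sat_imp_iff {a b : Expr X V O ar} {ξ : X → M.U} {w : M.W} :
    sat M ξ (.imp a b) w ↔ (sat M ξ a w → sat M ξ b w) := by
  simp only [sat, eval]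
  split_ifs with h
  · exact iff_of_true rfl h
  · exact iff_of_false M.tt_ne_ff.symm h

lemma eval_nabla_congr {e e' : Expr X V O ar} {ξ ξ' : X → M.U} {w : M.W}
    (h : ∀ w', eval M e ξ w' = eval M e' ξ' w') :
    eval M (.nabla e) ξ w = eval M (.nabla e') ξ' w := by
  simp only [eval, h]

lemma eval_congr_of_freeRigid {e : Expr X V O ar} {ξ₁ ξ₂ : X → M.U}
    (h : ∀ y, freeRigid y e → ξ₁ y = ξ₂ y) (w : M.W) :
    eval M e ξ₁ w = eval M e ξ₂ w := by
  induction e generalizing ξ₁ ξ₂ w with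
  | rig x => exact h x rfl
  | flex | fls => rfl
  | app op es ih =>
    simp only [eval]
    congr 1
    funext j
    exact ih j (fun y hy => h y ⟨j, hy⟩) w
  | eq a b iha ihb | imp a b iha ihb =>
    simp only [eval, iha (fun y hy => h y (.inl hy)) w, ihb (fun y hy => h y (.inr hy)) w]
  | all x e ih =>
    have hupd (d : M.U) : eval M e (Function.update ξ₁ x d) w
        = eval M e (Function.update ξ₂ x d) w := by
      refine ih (fun y hy => ?_) w
      by_cases hyx : y = x
      · simp [hyx]
      · simp only [Function.update_of_ne hyx]
        exact h y ⟨hyx, hy⟩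
    simp only [eval, hupd]
  | nabla e ih => exact eval_nabla_congr M (ih h)

lemma eval_update_of_not_freeRigid {e : Expr X V O ar} {x : X} (hx : ¬ freeRigid x e)
    (ξ : X → M.U) (d : M.U) (w : M.W) :
    eval M e (Function.update ξ x d) w = eval M e ξ w := by
  apply eval_congr_of_freeRigid
  intro y hy
  rw [Function.update_of_ne]
  rintro rfl
  exact hx hy

lemma Rigid.eval_eq {e : Expr X V O ar} (he : Rigid e) (ξ : X → M.U) (w w' : M.W) :
    eval M e ξ w = eval M e ξ w' := by
  induction e generalizing ξ with
  | rig | fls => rfl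
  | flex | nabla => exact he.elim
  | app op es ih =>
    simp only [eval]
    congr 1
    funext j
    exact ih j (he j) ξ
  | eq a b iha ihb | imp a b iha ihb =>
    simp only [eval, iha he.1 ξ, ihb he.2 ξ]
  | all x e ih =>
    simp only [eval, fun d => ih he (Function.update ξ x d)]

end Semantics

section Substitution

lemma mem_freeList_of_freeRigid {e : Expr X V O ar} {y : X} (hy : freeRigid y e) :
    y ∈ freeList e := by
  induction e with
  | rig x => simp [freeList, show y = x from hy]
  | flex | fls => exact hy.elim
  | app op es ih =>
    obtain ⟨j, hj⟩ := hy
    simp only [freeList, List.mem_flatten, List.mem_ofFn]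
    exact ⟨_, ⟨j, rfl⟩, ih j hj⟩
  | eq a b iha ihb | imp a b iha ihb =>
    simp only [freeList, List.mem_append]
    exact hy.imp iha ihb
  | all x e ih =>
    simp only [freeList, List.mem_filter, decide_eq_true_eq]
    exact ⟨ih hy.2, hy.1⟩
  | nabla e ih => exact ih hy

lemma eval_update_subst_of_not_mem (M : Model X V O ar) (σ : X → Expr X V O ar)
    {e : Expr X V O ar} {x x' y : X} (hx' : x' ∉ (freeList e).flatMap fun y => freeList (σ y))
    (hy : freeRigid y e) (hyx : y ≠ x) (ξ : X → M.U) (d : M.U) (w : M.W) :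
    eval M (Function.update σ x (.rig x') y) (Function.update ξ x' d) w = eval M (σ y) ξ w := by
  rw [Function.update_of_ne hyx, eval_update_of_not_freeRigid M]
  exact fun h => hx' (List.mem_flatMap.2
    ⟨y, mem_freeList_of_freeRigid hy, mem_freeList_of_freeRigid h⟩)

variable [Infinite X]

lemma freshVar_not_mem (l : List X) : freshVar l ∉ l := by
  simpa [freshVar] using Classical.choose_spec (Infinite.exists_notMem_finset l.toFinset)

lemma eval_subst_congr (M : Model X V O ar) (e : Expr X V O ar) (σ τ : X → Expr X V O ar)
    (ξ₁ ξ₂ : X → M.U) (w : M.W)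
    (hfree : ∀ y, freeRigid y e → eval M (σ y) ξ₁ w = eval M (τ y) ξ₂ w)
    (hnabla : ∀ y, freeRigid y e → occursUnderNabla y e →
      ∀ w', eval M (σ y) ξ₁ w' = eval M (τ y) ξ₂ w') :
    eval M (subst σ e) ξ₁ w = eval M (subst τ e) ξ₂ w := by
  induction e generalizing σ τ ξ₁ ξ₂ w with
  | rig x => exact hfree x rfl
  | flex | fls => rfl
  | app op es ih =>
    simp only [subst, eval]
    congr 1
    funext j
    exact ih j σ τ ξ₁ ξ₂ w (fun y hy => hfree y ⟨j, hy⟩)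
      (fun y hy hn => hnabla y ⟨j, hy⟩ ⟨j, hn⟩)
  | eq a b iha ihb | imp a b iha ihb =>
    simp only [subst, eval,
      iha σ τ ξ₁ ξ₂ w (fun y hy => hfree y (.inl hy)) (fun y hy hn => hnabla y (.inl hy) (.inl hn)),
      ihb σ τ ξ₁ ξ₂ w (fun y hy => hfree y (.inr hy)) (fun y hy hn => hnabla y (.inr hy) (.inr hn))]
  | all x e ih =>
    simp only [subst, eval]
    congr 2
    refine forall_congr fun d => congrArg (· = M.tt) ?_
    refine ih _ _ _ _ w (fun y hy => ?_) (fun y hy hn w' => ?_) <;> by_cases hyx : y = x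
    · simp [hyx, eval]
    · rw [eval_update_subst_of_not_mem M σ (freshVar_not_mem _) hy hyx,
        eval_update_subst_of_not_mem M τ (freshVar_not_mem _) hy hyx]
      exact hfree y ⟨hyx, hy⟩
    · simp [hyx, eval]
    · rw [eval_update_subst_of_not_mem M σ (freshVar_not_mem _) hy hyx,
        eval_update_subst_of_not_mem M τ (freshVar_not_mem _) hy hyx]
      exact hnabla y ⟨hyx, hy⟩ ⟨hyx, hn⟩ w'
  | nabla e ih =>
    exact eval_nabla_congr M fun w' =>
      ih σ τ ξ₁ ξ₂ w' (fun y hy => hnabla y hy hy w') (fun y hy _ => hnabla y hy hy)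

end Substitution

lemma substMap_update_eq_or {n : ℕ} (xs : Fin n → X) (es : Fin n → Expr X V O ar)
    (i : Fin n) (f : Expr X V O ar) (y : X) :
    substMap xs (Function.update es i f) y = substMap xs es y ∨
      (xs i = y ∧ substMap xs es y = es i ∧ substMap xs (Function.update es i f) y = f) := by
  unfold substMap
  split_ifs with hy
  · by_cases hji : hy.choose = i
    · exact .inr ⟨hji ▸ hy.choose_spec, by rw [hji], by rw [hji, Function.update_self]⟩
    · exact .inl (Function.update_of_ne hji _ _)
  · exact .inl rfl

theorem leibniz_implication_valid_general [Infinite X] {n : ℕ}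
    (xs : Fin n → X)
    (body : Expr X V O ar)
    (es : Fin n → Expr X V O ar) (f : Expr X V O ar) (i : Fin n)
    (h : (Rigid (es i) ∧ Rigid f) ∨ LeibnizPos xs body i) :
    Valid (Expr.imp (Expr.eq (es i) f)
      (Expr.eq (dApp xs body es) (dApp xs body (Function.update es i f)))) := by
  intro M ξ w
  rw [sat_imp_iff, sat_eq_iff, sat_eq_iff]
  intro heq
  refine eval_subst_congr M body _ _ ξ ξ w (fun y _ => ?_) (fun y _ hn w' => ?_) <;>
    rcases substMap_update_eq_or xs es i f y with hy | ⟨hxy, hes, hf⟩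
  · rw [hy]
  · rw [hes, hf, heq]
  · rw [hy]
  · obtain ⟨hrig_e, hrig_f⟩ := h.resolve_right (not_not_intro (hxy ▸ hn))
    rw [hes, hf, hrig_e.eval_eq M ξ w' w, heq, hrig_f.eval_eq M ξ w w']

/-- for an operator defined by d(x₁,…,xₙ) ≜ body, the implication
    (eᵢ = f) ⟹ (d(e₁,…,eₙ) = d(e₁,…,f,…,eₙ)) is valid whenever eᵢ and f are
    both rigid or the i-th argument position of d is Leibniz. -/
theorem leibniz_implication_valid [Infinite X] {n : ℕ}
    (xs : Fin n → X) (hinj : Function.Injective xs)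
    (body : Expr X V O ar) (hbody : ∀ y : X, freeRigid y body → ∃ i, xs i = y)
    (es : Fin n → Expr X V O ar) (f : Expr X V O ar) (i : Fin n)
    (h : (Rigid (es i) ∧ Rigid f) ∨ LeibnizPos xs body i) :
    Valid (Expr.imp (Expr.eq (es i) f)
      (Expr.eq (dApp xs body es) (dApp xs body (Function.update es i f)))) :=
  leibniz_implication_valid_general xs body es f i h
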